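/- arXiv:1604.05288 — 3 statements merged into one kernel-verified Lean document; each statement's English description precedes it below -/
import Mathlib

section
/- If M is an inductively coherent approximation scheme, and {φₙ} and {ψₙ} are quickly computable sequences of sentences such that for every n the equivalence φₙ ↔ ψₙ is provable in T, then the difference Mₙ(φₙ) − Mₙ(ψₙ) tends to 0 as n → ∞. -/
open Filter Topology

/-- An abstract language of sentences with the usual connectives and a
provability predicate. -/
structure LogicCtx (S : Type) where
  neg : S → S
  disj : S → S → S
  conj : S → S → S
  imp : S → S → S
  bot : S
  Provable : S → Prop

namespace LogicCtx

variable {S : Type} (L : LogicCtx S)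

/-- Conjunction of a list of sentences. -/
def bigConj : List S → S
  | [] => L.neg L.bot
  | φ :: rest => L.conj φ (bigConj rest)

/-- Disjunction of a list of sentences. -/
def bigDisj : List S → S
  | [] => L.bot
  | φ :: rest => L.disj φ (bigDisj rest)

/-- The sentence expressing that exactly one member of `l` is true. -/
def exactlyOne (l : List S) : S :=
  L.bigDisj ((List.range l.length).map fun i =>
    L.bigConj (l.mapIdx fun j φ => if i = j then φ else L.neg φ))

/-- `{φ, ψ, χ}` is a provable partition of truth: it is provable that exactly
one of them holds. -/
def PartitionOfTruth (φ ψ χ : S) : Prop :=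
  L.Provable (L.exactlyOne [φ, ψ, χ])

/-- Finite disjunctions `f 0 ∨ ⋯ ∨ f n` of a sequence. -/
def finDisj (f : ℕ → S) : ℕ → S
  | 0 => f 0
  | n + 1 => L.disj (finDisj f n) (f (n + 1))

/-- A boolean valuation respecting the connectives. -/
def IsValuation (v : S → Bool) : Prop :=
  v L.bot = false ∧ (∀ φ, v (L.neg φ) = !v φ) ∧
  (∀ φ ψ, v (L.disj φ ψ) = (v φ || v ψ)) ∧
  (∀ φ ψ, v (L.conj φ ψ) = (v φ && v ψ)) ∧
  (∀ φ ψ, v (L.imp φ ψ) = (!v φ || v ψ))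

/-- `Provable` respects propositional reasoning: every propositional
consequence of provable sentences is provable. -/
def RespectsPropLogic : Prop :=
  ∀ φ, (∀ v, L.IsValuation v → (∀ χ, L.Provable χ → v χ = true) → v φ = true) →
    L.Provable φ

/-- The family of quickly computable sequences: contains all constant
sequences and is closed under pointwise negation, disjunction, conjunction,
finite disjunctions, and shift. -/
def QCClosed (QC : (ℕ → S) → Prop) : Prop :=
  (∀ φ, QC fun _ => φ) ∧
  (∀ f, QC f → QC fun n => L.neg (f n)) ∧
  (∀ f g, QC f → QC g → QC fun n => L.disj (f n) (g n)) ∧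
  (∀ f g, QC f → QC g → QC fun n => L.conj (f n) (g n)) ∧
  (∀ f, QC f → QC (L.finDisj f)) ∧
  (∀ f, QC f → QC fun n => f (n + 1))

/-- Inductive coherence of an approximation scheme `M : ℕ → S → ℝ` with
values in `[0,1]`:
1. `Mₙ(⊥) → 0`;
2. `Mₙ(φₙ)` converges whenever `{φₙ}` is quickly computable and each
   `φₙ → φₙ₊₁` is provable;
3. `Mₙ(φₙ) + Mₙ(ψₙ) + Mₙ(χₙ) → 1` whenever the three sequences are quickly
   computable and each `{φₙ, ψₙ, χₙ}` is a provable partition of truth. -/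
def InductivelyCoherent (QC : (ℕ → S) → Prop) (M : ℕ → S → ℝ) : Prop :=
  (∀ n φ, M n φ ∈ Set.Icc (0 : ℝ) 1) ∧
  Tendsto (fun n => M n L.bot) atTop (𝓝 0) ∧
  (∀ f, QC f → (∀ n, L.Provable (L.imp (f n) (f (n + 1)))) →
    ∃ l, Tendsto (fun n => M n (f n)) atTop (𝓝 l)) ∧
  (∀ f g h, QC f → QC g → QC h → (∀ n, L.PartitionOfTruth (f n) (g n) (h n)) →
    Tendsto (fun n => M n (f n) + M n (g n) + M n (h n)) atTop (𝓝 1))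

end LogicCtx

/-! Both `{φₙ, ¬ψₙ, ⊥}` and `{ψₙ, ¬ψₙ, ⊥}` are provable partitions of truth, since `φₙ ↔ ψₙ`
is provable. By coherence both triple sums of `M` tend to `1`; their difference is
`Mₙ(φₙ) − Mₙ(ψₙ)`. -/

namespace LogicCtx

variable {S : Type} {L : LogicCtx S}

theorem IsValuation.exactlyOne_three {v : S → Bool} (hv : L.IsValuation v) (a b c : S) :
    v (L.exactlyOne [a, b, c]) =
      (v a && !v b && !v c || !v a && v b && !v c || !v a && !v b && v c) := by
  obtain ⟨vbot, vneg, vdisj, vconj, -⟩ := hv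
  cases ha : v a <;> cases hb : v b <;> cases hc : v c <;>
    simp [exactlyOne, bigDisj, bigConj, List.range_succ, vdisj, vconj, vneg, vbot, ha, hb, hc]

theorem partitionOfTruth_neg_bot (hPL : L.RespectsPropLogic) {α β : S}
    (hαβ : L.Provable (L.imp α β)) (hβα : L.Provable (L.imp β α)) :
    L.PartitionOfTruth α (L.neg β) L.bot := by
  refine hPL _ fun v hv hprov => ?_
  have e₁ := hprov _ hαβ
  have e₂ := hprov _ hβα
  rw [hv.2.2.2.2] at e₁ e₂
  rw [hv.exactlyOne_three, hv.1, hv.2.1]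
  cases hα : v α <;> cases hβ : v β <;> simp_all

theorem provable_imp_self (hPL : L.RespectsPropLogic) (α : S) : L.Provable (L.imp α α) :=
  hPL _ fun v hv _ => by rw [hv.2.2.2.2, Bool.not_or_self]

theorem InductivelyCoherent.tendsto_sub_of_partitionOfTruth {QC : (ℕ → S) → Prop}
    {M : ℕ → S → ℝ} (hM : L.InductivelyCoherent QC M) {f g h k : ℕ → S}
    (hf : QC f) (hg : QC g) (hh : QC h) (hk : QC k)
    (hfhk : ∀ n, L.PartitionOfTruth (f n) (h n) (k n))
    (hghk : ∀ n, L.PartitionOfTruth (g n) (h n) (k n)) :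
    Tendsto (fun n => M n (f n) - M n (g n)) atTop (𝓝 0) := by
  have hlim := (hM.2.2.2 _ _ _ hf hh hk hfhk).sub (hM.2.2.2 _ _ _ hg hh hk hghk)
  rw [sub_self] at hlim
  convert hlim using 2 with n
  ring

end LogicCtx

/-- If `M` is inductively coherent and `{φₙ}`, `{ψₙ}` are
quickly computable with `φₙ ↔ ψₙ` provable for every `n`, then
`Mₙ(φₙ) − Mₙ(ψₙ) → 0`. -/
theorem inductively_coherent_equiv_diff_tendsto_zero
    (S : Type) (L : LogicCtx S) (QC : (ℕ → S) → Prop)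
    (hPL : L.RespectsPropLogic) (hQC : L.QCClosed QC)
    (M : ℕ → S → ℝ) (hM : L.InductivelyCoherent QC M)
    (φ ψ : ℕ → S) (hφ : QC φ) (hψ : QC ψ)
    (hequiv : ∀ n, L.Provable (L.imp (φ n) (ψ n)) ∧ L.Provable (L.imp (ψ n) (φ n))) :
    Filter.Tendsto (fun n => M n (φ n) - M n (ψ n)) Filter.atTop (nhds 0) := by
  obtain ⟨hconst, hneg, -⟩ := hQC
  have hrefl := LogicCtx.provable_imp_self hPL
  exact hM.tendsto_sub_of_partitionOfTruth hφ hψ (hneg _ hψ) (hconst L.bot)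
    (fun n => LogicCtx.partitionOfTruth_neg_bot hPL (hequiv n).1 (hequiv n).2)
    (fun n => LogicCtx.partitionOfTruth_neg_bot hPL (hrefl (ψ n)) (hrefl (ψ n)))
end

section
/- If M is an inductively coherent approximation scheme, k ≥ 1, and {φₙ¹},…,{φₙᵏ} are quickly computable sequences of sentences such that for each n it is provable that exactly one of φₙ¹,…,φₙᵏ is true, then the sum Σᵢ Mₙ(φₙⁱ) tends to 1 as n → ∞. -/
open Filter Topology

/-! Replacing the first two members `φ, ψ` of a provable partition of truth by `φ ∨ ψ` gives a
shorter provable partition, and in the limit `Mₙ` is additive on such a pair. By induction on the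
length this reduces the claim to a single provably true sentence `φ`, whose weight tends to `1`
because `{φ, ⊥, ⊥}` is a provable partition and `Mₙ(⊥) → 0`. -/

namespace LogicCtx

variable {S : Type} {L : LogicCtx S}

section Semantics

variable {v : S → Bool}

theorem IsValuation.eval_bigDisj (hv : L.IsValuation v) (l : List S) :
    v (L.bigDisj l) = l.any v := by
  induction l with
  | nil => simp [bigDisj, hv.1]
  | cons φ l ih => simp [bigDisj, hv.2.2.1, ih]

theorem IsValuation.eval_bigConj (hv : L.IsValuation v) (l : List S) :
    v (L.bigConj l) = l.all v := by
  induction l with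
  | nil => simp [bigConj, hv.2.1, hv.1]
  | cons φ l ih => simp [bigConj, hv.2.2.2.1, ih]

theorem IsValuation.eval_exactlyOne_nil (hv : L.IsValuation v) : v (L.exactlyOne []) = false :=
  hv.1

theorem IsValuation.eval_exactlyOne_cons (hv : L.IsValuation v) (φ : S) (l : List S) :
    v (L.exactlyOne (φ :: l)) = (v φ && l.all (!v ·) || !v φ && v (L.exactlyOne l)) := by
  have hmapIdx_neg : l.mapIdx (fun _ ψ => L.neg ψ) = l.map L.neg :=
    List.ext_getElem (by simp) (by simp)
  cases hφ : v φ <;>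
    simp [exactlyOne, List.range_succ_eq_map, List.mapIdx_cons, Function.comp_def,
      hv.eval_bigDisj, hv.eval_bigConj, hv.2.1, hmapIdx_neg, hφ]

end Semantics

theorem RespectsPropLogic.provable_of_entails (hPL : L.RespectsPropLogic) {σ τ : S}
    (hσ : L.Provable σ) (h : ∀ v, L.IsValuation v → v σ = true → v τ = true) :
    L.Provable τ :=
  hPL τ fun v hv hprov => h v hv (hprov σ hσ)

theorem partitionOfTruth_neg_bot_s2 (hPL : L.RespectsPropLogic) (φ : S) :
    L.PartitionOfTruth φ (L.neg φ) L.bot :=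
  hPL _ fun v hv _ => by
    cases hφ : v φ <;> simp [hv.eval_exactlyOne_cons, hv.eval_exactlyOne_nil, hv.1, hv.2.1, hφ]

theorem partitionOfTruth_bot_bot_of_exactlyOne (hPL : L.RespectsPropLogic) {φ : S}
    (h : L.Provable (L.exactlyOne [φ])) : L.PartitionOfTruth φ L.bot L.bot :=
  hPL.provable_of_entails h fun v hv => by
    simp [hv.eval_exactlyOne_cons, hv.eval_exactlyOne_nil, hv.1]

theorem partitionOfTruth_neg_disj_of_exactlyOne (hPL : L.RespectsPropLogic) {φ ψ : S}
    {l : List S} (h : L.Provable (L.exactlyOne (φ :: ψ :: l))) :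
    L.PartitionOfTruth φ ψ (L.neg (L.disj φ ψ)) :=
  hPL.provable_of_entails h fun v hv => by
    cases hφ : v φ <;> cases hψ : v ψ <;>
      simp [hv.eval_exactlyOne_cons, hv.eval_exactlyOne_nil, hv.2.1, hv.2.2.1, hφ, hψ]

theorem provable_exactlyOne_disj_cons (hPL : L.RespectsPropLogic) {φ ψ : S} {l : List S}
    (h : L.Provable (L.exactlyOne (φ :: ψ :: l))) :
    L.Provable (L.exactlyOne (L.disj φ ψ :: l)) :=
  hPL.provable_of_entails h fun v hv => by
    cases hφ : v φ <;> cases hψ : v ψ <;>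
      simp [hv.eval_exactlyOne_cons, hv.2.2.1, hφ, hψ]

section Coherence

variable {QC : (ℕ → S) → Prop} {M : ℕ → S → ℝ}

theorem InductivelyCoherent.tendsto_one_of_partitionOfTruth_bot_bot (hQC : L.QCClosed QC)
    (hM : L.InductivelyCoherent QC M) {f : ℕ → S} (hf : QC f)
    (h : ∀ n, L.PartitionOfTruth (f n) L.bot L.bot) :
    Tendsto (fun n => M n (f n)) atTop (𝓝 1) := by
  have hsum := hM.2.2.2 f _ _ hf (hQC.1 L.bot) (hQC.1 L.bot) h
  simpa using (hsum.sub hM.2.1).sub hM.2.1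

/-- Compare the partitions `{φ, ψ, ¬(φ ∨ ψ)}` and `{φ ∨ ψ, ¬(φ ∨ ψ), ⊥}`. -/
theorem InductivelyCoherent.tendsto_add_sub_disj (hPL : L.RespectsPropLogic)
    (hQC : L.QCClosed QC) (hM : L.InductivelyCoherent QC M) {f g : ℕ → S} (hf : QC f)
    (hg : QC g) (h : ∀ n, L.PartitionOfTruth (f n) (g n) (L.neg (L.disj (f n) (g n)))) :
    Tendsto (fun n => M n (f n) + M n (g n) - M n (L.disj (f n) (g n))) atTop (𝓝 0) := by
  have hd : QC fun n => L.disj (f n) (g n) := hQC.2.2.1 f g hf hg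
  have hnd := hQC.2.1 _ hd
  have hfg := hM.2.2.2 f g _ hf hg hnd h
  have hd_nd := hM.2.2.2 _ _ _ hd hnd (hQC.1 L.bot) fun n => partitionOfTruth_neg_bot_s2 hPL _
  have hlim := (hfg.sub hd_nd).add hM.2.1
  rw [sub_self, zero_add] at hlim
  exact hlim.congr fun n => by ring

theorem InductivelyCoherent.tendsto_sum_of_provable_exactlyOne (hPL : L.RespectsPropLogic)
    (hQC : L.QCClosed QC) (hM : L.InductivelyCoherent QC M) (l : List (ℕ → S)) {f : ℕ → S}
    (hf : QC f) (hl : ∀ g ∈ l, QC g)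
    (h : ∀ n, L.Provable (L.exactlyOne (f n :: l.map (· n)))) :
    Tendsto (fun n => M n (f n) + (l.map fun g => M n (g n)).sum) atTop (𝓝 1) := by
  induction l generalizing f with
  | nil =>
    simpa using hM.tendsto_one_of_partitionOfTruth_bot_bot hQC hf fun n =>
      partitionOfTruth_bot_bot_of_exactlyOne hPL (h n)
  | cons g l ih =>
    have hg := hl g List.mem_cons_self
    have hdisj := ih (hQC.2.2.1 f g hf hg) (fun g' hg' => hl g' (List.mem_cons_of_mem g hg'))
      fun n => provable_exactlyOne_disj_cons hPL (h n)
    have hadd := hM.tendsto_add_sub_disj hPL hQC hf hg fun n =>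
      partitionOfTruth_neg_disj_of_exactlyOne hPL (h n)
    have hlim := hdisj.add hadd
    rw [add_zero] at hlim
    refine hlim.congr fun n => ?_
    simp only [List.map_cons, List.sum_cons]
    ring

end Coherence

end LogicCtx

/-- If `M` is inductively coherent, `k ≥ 1`, and
`{φₙ¹}, …, {φₙᵏ}` are quickly computable sequences such that for each `n` it
is provable that exactly one of `φₙ¹, …, φₙᵏ` is true, then
`∑ᵢ Mₙ(φₙⁱ) → 1`. -/
theorem inductively_coherent_partition_sum_tendsto_one
    (S : Type) (L : LogicCtx S) (QC : (ℕ → S) → Prop)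
    (hPL : L.RespectsPropLogic) (hQC : L.QCClosed QC)
    (M : ℕ → S → ℝ) (hM : L.InductivelyCoherent QC M)
    (k : ℕ) (hk : 1 ≤ k) (φ : Fin k → ℕ → S) (hφ : ∀ i, QC (φ i))
    (hpart : ∀ n, L.Provable (L.exactlyOne (List.ofFn fun i => φ i n))) :
    Filter.Tendsto (fun n => ∑ i : Fin k, M n (φ i n)) Filter.atTop (nhds 1) := by
  obtain ⟨N, rfl⟩ : ∃ N, k = N + 1 := ⟨k - 1, by omega⟩
  have hlim := hM.tendsto_sum_of_provable_exactlyOne hPL hQC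
    (List.ofFn fun i : Fin N => φ i.succ) (hφ 0) (by simpa using fun i : Fin N => hφ i.succ)
    fun n => by
      simpa [List.map_ofFn, Function.comp_def, List.ofFn_succ] using hpart n
  simpa [Fin.sum_univ_succ, List.map_ofFn, List.sum_ofFn, Function.comp_def] using hlim
end

section
/- If M is an inductively coherent approximation scheme and {φₙ}, {ψₙ} are quickly computable sequences such that for each n it is provable that φₙ → ψₙ, then lim infₙ (Mₙ(ψₙ) − Mₙ(φₙ)) ≥ 0; i.e., asymptotically Mₙ(ψₙ) ≳ Mₙ(φₙ). -/
open Filter Topology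

lemma val_eo_aux {S : Type} (L : LogicCtx S) {v : S → Bool} (hv : L.IsValuation v)
    (a b c : S) :
    v (L.exactlyOne [a, b, c]) =
      ((v a && !v b && !v c) || (!v a && v b && !v c) || (!v a && !v b && v c)) := by
  obtain ⟨h0, hn, hd, hc, hi⟩ := hv
  simp [LogicCtx.exactlyOne, LogicCtx.bigDisj, LogicCtx.bigConj, List.range_succ,
    List.mapIdx, List.mapIdx.go, hn, hd, hc, h0]
  cases v a <;> cases v b <;> cases v c <;> rfl

/-- If `M` is inductively coherent and `{φₙ}`, `{ψₙ}` are
quickly computable with `φₙ → ψₙ` provable for each `n`, then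
`lim infₙ (Mₙ(ψₙ) − Mₙ(φₙ)) ≥ 0`. -/
theorem inductively_coherent_liminf_monotone
    (S : Type) (L : LogicCtx S) (QC : (ℕ → S) → Prop)
    (hPL : L.RespectsPropLogic) (hQC : L.QCClosed QC)
    (M : ℕ → S → ℝ) (hM : L.InductivelyCoherent QC M)
    (φ ψ : ℕ → S) (hφ : QC φ) (hψ : QC ψ)
    (himp : ∀ n, L.Provable (L.imp (φ n) (ψ n))) :
    0 ≤ Filter.liminf (fun n => M n (ψ n) - M n (φ n)) Filter.atTop := by
  obtain ⟨hIcc, hbot, hconv, hpart⟩ := hM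
  obtain ⟨hQconst, hQneg, hQdisj, hQconj, hQfin, hQshift⟩ := hQC
  -- partition 1 : {φₙ, ψₙ ∧ ¬φₙ, ¬ψₙ}
  have hA : Tendsto (fun n => M n (φ n) + M n (L.conj (ψ n) (L.neg (φ n)))
      + M n (L.neg (ψ n))) atTop (𝓝 1) := by
    apply hpart _ _ _ hφ (hQconj _ _ hψ (hQneg _ hφ)) (hQneg _ hψ)
    intro n
    apply hPL
    intro v hv hprov
    have himpv := hprov _ (himp n)
    obtain ⟨h0, hn, hd, hc, hi⟩ := hv
    rw [val_eo_aux L ⟨h0, hn, hd, hc, hi⟩]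
    rw [hi] at himpv
    simp only [hn, hc]
    revert himpv
    cases v (φ n) <;> cases v (ψ n) <;> simp
  -- partition 2 : {ψₙ, ¬ψₙ, ⊥}
  have hB : Tendsto (fun n => M n (ψ n) + M n (L.neg (ψ n)) + M n L.bot)
      atTop (𝓝 1) := by
    apply hpart _ _ _ hψ (hQneg _ hψ) (hQconst _)
    intro n
    apply hPL
    intro v hv hprov
    obtain ⟨h0, hn, hd, hc, hi⟩ := hv
    rw [val_eo_aux L ⟨h0, hn, hd, hc, hi⟩]
    simp only [hn, h0]
    cases v (ψ n) <;> rfl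
  set c : ℕ → ℝ := fun n =>
    (M n (ψ n) + M n (L.neg (ψ n)) + M n L.bot)
      - (M n (φ n) + M n (L.conj (ψ n) (L.neg (φ n))) + M n (L.neg (ψ n)))
      - M n L.bot with hcdef
  have hc : Tendsto c atTop (𝓝 0) := by
    have := (hB.sub hA).sub hbot
    simpa using this
  have hle : ∀ n, c n ≤ M n (ψ n) - M n (φ n) := by
    intro n
    have := (hIcc n (L.conj (ψ n) (L.neg (φ n)))).1
    simp only [hcdef]
    linarith
  have h0 : Filter.liminf c Filter.atTop = 0 := hc.liminf_eq
  rw [← h0]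
  have hcob : Filter.IsCoboundedUnder (· ≥ ·) Filter.atTop
      (fun n => M n (ψ n) - M n (φ n)) := by
    refine Filter.IsBoundedUnder.isCoboundedUnder_ge ?_
    refine Filter.isBoundedUnder_of ⟨2, fun n => ?_⟩
    have h1 := (hIcc n (ψ n)).2
    have h2 := (hIcc n (φ n)).1
    linarith
  exact Filter.liminf_le_liminf (Filter.Eventually.of_forall hle)
    (hu := hc.isBoundedUnder_ge) (hv := hcob)
end
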